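/- arXiv:2402.05595 — 6 statements merged into one kernel-verified Lean document; each statement's English description precedes it below -/
import Mathlib

section
/- Let n ≥ 1, let ψ be a unit vector in ℂⁿ, let U be an n×n unitary matrix over ℂ, let V₁, V₂ be arbitrary n×n complex matrices, and let p ∈ [0,1]. Define ε₁ = V₁ψ − Uψ, ε₂ = V₂ψ − Uψ, and εₘ = p·ε₁ + (1−p)·ε₂, and suppose ‖ε₁‖ ≤ a₁, ‖ε₂‖ ≤ a₂, and ‖εₘ‖ ≤ b (Euclidean norms). Then the Frobenius norm of the matrix p·(V₁ψ)(V₁ψ)* + (1−p)·(V₂ψ)(V₂ψ)* − (Uψ)(Uψ)* is at most 2b + p·a₁² + (1−p)·a₂². -/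
/-!
Write `u = Uψ` and `Vᵢψ = u + εᵢ`. Expanding the outer products, the terms linear in the errors
combine into `u εₘ* + εₘ u*` because the weights sum to one, so only the second-order terms
`p ε₁ε₁* + (1 - p) ε₂ε₂*` keep the individual errors. Since `‖x y*‖_F = ‖x‖ ‖y‖` and `‖u‖ = 1`,
the triangle inequality gives the bound.
-/

/-- The Euclidean norm of a vector in `ℂⁿ`. -/
noncomputable def eucNorm {n : ℕ} (v : Fin n → ℂ) : ℝ :=
  Real.sqrt (∑ i, ‖v i‖ ^ 2)

/-- The Frobenius norm of an `n × n` complex matrix. -/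
noncomputable def frobNorm {n : ℕ} (M : Matrix (Fin n) (Fin n) ℂ) : ℝ :=
  Real.sqrt (∑ i, ∑ j, ‖M i j‖ ^ 2)

open Matrix WithLp

attribute [local instance] Matrix.frobeniusNormedAddCommGroup Matrix.frobeniusNormSMulClass

lemma eucNorm_eq_norm {n : ℕ} (v : Fin n → ℂ) : eucNorm v = ‖toLp 2 v‖ := by
  simp [eucNorm, EuclideanSpace.norm_eq]

lemma frobNorm_eq_norm {n : ℕ} (M : Matrix (Fin n) (Fin n) ℂ) : frobNorm M = ‖M‖ := by
  simp [frobNorm, frobenius_norm_def, Real.sqrt_eq_rpow]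

lemma Matrix.frobenius_norm_vecMulVec {m n α : Type*} [Fintype m] [Fintype n]
    [NormedDivisionRing α] (a : m → α) (c : n → α) :
    ‖vecMulVec a c‖ = ‖toLp 2 a‖ * ‖toLp 2 c‖ := by
  rw [frobenius_norm_def, PiLp.norm_eq_of_L2, PiLp.norm_eq_of_L2,
    ← Real.sqrt_mul (by positivity), Finset.sum_mul_sum, Real.sqrt_eq_rpow]
  simp [vecMulVec_apply, norm_mul, mul_pow]

lemma Matrix.frobenius_norm_vecMulVec_star {m n α : Type*} [Fintype m] [Fintype n]
    [NormedDivisionRing α] [StarRing α] [NormedStarGroup α] (a : m → α) (c : n → α) :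
    ‖vecMulVec a (star c)‖ = ‖toLp 2 a‖ * ‖toLp 2 c‖ := by
  simp [frobenius_norm_vecMulVec, PiLp.norm_eq_of_L2]

lemma Matrix.norm_toLp_mulVec_of_mem_unitaryGroup {n 𝕜 : Type*} [Fintype n] [DecidableEq n]
    [RCLike 𝕜] {U : Matrix n n 𝕜} (hU : U ∈ unitaryGroup n 𝕜) (v : n → 𝕜) :
    ‖toLp 2 (U *ᵥ v)‖ = ‖toLp 2 v‖ :=
  ContinuousLinearMap.norm_map_of_mem_unitary
    (Unitary.map_mem (toEuclideanCLM (n := n) (𝕜 := 𝕜)) hU) (toLp 2 v)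

lemma Matrix.mix_vecMulVec_star_sub_eq {n 𝕜 : Type*} [RCLike 𝕜] (p : ℝ) (u e₁ e₂ : n → 𝕜) :
    p • vecMulVec (u + e₁) (star (u + e₁)) + (1 - p) • vecMulVec (u + e₂) (star (u + e₂))
        - vecMulVec u (star u)
      = vecMulVec u (star (p • e₁ + (1 - p) • e₂)) + vecMulVec (p • e₁ + (1 - p) • e₂) (star u)
        + p • vecMulVec e₁ (star e₁) + (1 - p) • vecMulVec e₂ (star e₂) := by
  simp only [star_add, star_smul, star_trivial, add_vecMulVec, vecMulVec_add, smul_vecMulVec,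
    vecMulVec_smul]
  module

theorem mixing_channel_frobenius_bound_general {n : ℕ}
    (ψ : Fin n → ℂ) (hψ : eucNorm ψ = 1)
    (U : Matrix (Fin n) (Fin n) ℂ) (hU : U ∈ Matrix.unitaryGroup (Fin n) ℂ)
    (V₁ V₂ : Matrix (Fin n) (Fin n) ℂ)
    (p a₁ a₂ b : ℝ) (hp0 : 0 ≤ p) (hp1 : p ≤ 1)
    (ε₁ ε₂ εm : Fin n → ℂ)
    (hε₁ : ε₁ = V₁.mulVec ψ - U.mulVec ψ)
    (hε₂ : ε₂ = V₂.mulVec ψ - U.mulVec ψ)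
    (hεm : εm = p • ε₁ + (1 - p) • ε₂)
    (ha₁ : eucNorm ε₁ ≤ a₁) (ha₂ : eucNorm ε₂ ≤ a₂) (hb : eucNorm εm ≤ b) :
    frobNorm (p • Matrix.vecMulVec (V₁.mulVec ψ) (star (V₁.mulVec ψ))
        + (1 - p) • Matrix.vecMulVec (V₂.mulVec ψ) (star (V₂.mulVec ψ))
        - Matrix.vecMulVec (U.mulVec ψ) (star (U.mulVec ψ)))
      ≤ 2 * b + p * a₁ ^ 2 + (1 - p) * a₂ ^ 2 := by
  set u := U *ᵥ ψ
  have hu : ‖toLp 2 u‖ = 1 := by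
    rw [norm_toLp_mulVec_of_mem_unitaryGroup hU, ← eucNorm_eq_norm, hψ]
  rw [eucNorm_eq_norm] at ha₁ ha₂ hb
  have hq : 0 ≤ 1 - p := sub_nonneg.mpr hp1
  rw [show V₁ *ᵥ ψ = u + ε₁ by rw [hε₁, add_sub_cancel], show V₂ *ᵥ ψ = u + ε₂ by
    rw [hε₂, add_sub_cancel], frobNorm_eq_norm, mix_vecMulVec_star_sub_eq, ← hεm]
  calc _ ≤ ‖vecMulVec u (star εm)‖ + ‖vecMulVec εm (star u)‖
        + ‖p • vecMulVec ε₁ (star ε₁)‖ + ‖(1 - p) • vecMulVec ε₂ (star ε₂)‖ := norm_add₄_le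
    _ = 2 * ‖toLp 2 εm‖ + p * ‖toLp 2 ε₁‖ ^ 2 + (1 - p) * ‖toLp 2 ε₂‖ ^ 2 := by
      simp only [norm_smul, frobenius_norm_vecMulVec_star, hu, Real.norm_of_nonneg hp0,
        Real.norm_of_nonneg hq]
      ring
    _ ≤ 2 * b + p * a₁ ^ 2 + (1 - p) * a₂ ^ 2 := by gcongr

/-- Quantitative bound of the mixing lemma for the unnormalized mixed-channel
output, in Frobenius norm. -/
theorem mixing_channel_frobenius_bound {n : ℕ} (hn : 1 ≤ n)
    (ψ : Fin n → ℂ) (hψ : eucNorm ψ = 1)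
    (U : Matrix (Fin n) (Fin n) ℂ) (hU : U ∈ Matrix.unitaryGroup (Fin n) ℂ)
    (V₁ V₂ : Matrix (Fin n) (Fin n) ℂ)
    (p a₁ a₂ b : ℝ) (hp0 : 0 ≤ p) (hp1 : p ≤ 1)
    (ε₁ ε₂ εm : Fin n → ℂ)
    (hε₁ : ε₁ = V₁.mulVec ψ - U.mulVec ψ)
    (hε₂ : ε₂ = V₂.mulVec ψ - U.mulVec ψ)
    (hεm : εm = p • ε₁ + (1 - p) • ε₂)
    (ha₁ : eucNorm ε₁ ≤ a₁) (ha₂ : eucNorm ε₂ ≤ a₂) (hb : eucNorm εm ≤ b) :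
    frobNorm (p • Matrix.vecMulVec (V₁.mulVec ψ) (star (V₁.mulVec ψ))
        + (1 - p) • Matrix.vecMulVec (V₂.mulVec ψ) (star (V₂.mulVec ψ))
        - Matrix.vecMulVec (U.mulVec ψ) (star (U.mulVec ψ)))
      ≤ 2 * b + p * a₁ ^ 2 + (1 - p) * a₂ ^ 2 :=
  mixing_channel_frobenius_bound_general ψ hψ U hU V₁ V₂ p a₁ a₂ b hp0 hp1 ε₁ ε₂ εm hε₁ hε₂ hεm ha₁
    ha₂ hb
end

section
/- Let A be a unital C*-algebra, let U ∈ A be a unitary element (U*U = UU* = 1), let F ∈ A, and let δ ≥ 0 satisfy ‖F − U‖ ≤ δ. Then ‖(3/2)·F − (1/2)·F·F*·F − U‖ ≤ δ·(δ² + 3δ + 4)/2. -/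
private lemma mul3_norm_le {A : Type*} [NormedRing A] {x y z : A} {a b c : ℝ}
    (hx : ‖x‖ ≤ a) (hy : ‖y‖ ≤ b) (hz : ‖z‖ ≤ c) : ‖x * (y * z)‖ ≤ a * b * c := by
  calc ‖x * (y * z)‖ ≤ ‖x‖ * ‖y * z‖ := norm_mul_le _ _
    _ ≤ a * (b * c) :=
      mul_le_mul hx ((norm_mul_le y z).trans
        (mul_le_mul hy hz (norm_nonneg z) ((norm_nonneg y).trans hy)))
        (norm_nonneg _) ((norm_nonneg x).trans hx)
    _ = a * b * c := (mul_assoc a b c).symm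

/-- Error bound for one round of oblivious amplitude amplification (Lemma A.1):
`V₁ = (3/2)F − (1/2)FF*F` approximates the unitary `U` to error
`δ(δ² + 3δ + 4)/2` whenever `‖F − U‖ ≤ δ`. -/
theorem oaa_one_round_error_bound
    {A : Type*} [NormedRing A] [StarRing A] [CStarRing A]
    [CompleteSpace A] [Nontrivial A] [NormedAlgebra ℝ A]
    (U : A) (hU : U ∈ unitary A) (F : A) (δ : ℝ) (hδ : 0 ≤ δ)
    (h : ‖F - U‖ ≤ δ) :
    ‖(3 / 2 : ℝ) • F - (1 / 2 : ℝ) • (F * star F * F) - U‖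
      ≤ δ * (δ ^ 2 + 3 * δ + 4) / 2 := by
  set E := F - U with hE
  have hF : F = U + E := by rw [hE]; abel
  have h2 : star U * U = 1 := (Unitary.mem_iff.mp hU).1
  have hnU : ‖U‖ ≤ 1 := le_of_eq (CStarRing.norm_of_mem_unitary hU)
  have hnsU : ‖star U‖ ≤ 1 := by rw [norm_star]; exact hnU
  have hEδ : ‖E‖ ≤ δ := h
  have hsE : ‖star E‖ ≤ δ := by rw [norm_star]; exact h
  have key : (3 / 2 : ℝ) • F - (1 / 2 : ℝ) • (F * star F * F) - U
      = E - (1 / 2 : ℝ) • (U * (star U * E) + U * (star E * U)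
          + U * (star E * E) + E * (star U * E) + E * (star E * U)
          + E * (star E * E)) := by
    rw [hF]
    simp only [star_add, mul_add, add_mul, mul_assoc, h2, mul_one]
    module
  rw [key]
  have n1 : ‖U * (star U * E)‖ ≤ 1 * 1 * δ := mul3_norm_le hnU hnsU hEδ
  have n2 : ‖U * (star E * U)‖ ≤ 1 * δ * 1 := mul3_norm_le hnU hsE hnU
  have n4 : ‖U * (star E * E)‖ ≤ 1 * δ * δ := mul3_norm_le hnU hsE hEδ
  have n5 : ‖E * (star U * E)‖ ≤ δ * 1 * δ := mul3_norm_le hEδ hnsU hEδ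
  have n6 : ‖E * (star E * U)‖ ≤ δ * δ * 1 := mul3_norm_le hEδ hsE hnU
  have n7 : ‖E * (star E * E)‖ ≤ δ * δ * δ := mul3_norm_le hEδ hsE hEδ
  have hS : ‖U * (star U * E) + U * (star E * U) + U * (star E * E)
      + E * (star U * E) + E * (star E * U) + E * (star E * E)‖
      ≤ 1 * 1 * δ + 1 * δ * 1 + 1 * δ * δ + δ * 1 * δ + δ * δ * 1 + δ * δ * δ :=
    le_trans (norm_add_le _ _) (add_le_add
      (le_trans (norm_add_le _ _) (add_le_add
        (le_trans (norm_add_le _ _) (add_le_add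
          (le_trans (norm_add_le _ _) (add_le_add
            (le_trans (norm_add_le _ _) (add_le_add n1 n2))
            n4))
          n5))
        n6))
      n7)
  have hsmul : ‖(1 / 2 : ℝ) • (U * (star U * E) + U * (star E * U)
      + U * (star E * E) + E * (star U * E) + E * (star E * U)
      + E * (star E * E))‖
      ≤ (1 / 2) * (1 * 1 * δ + 1 * δ * 1 + 1 * δ * δ + δ * 1 * δ + δ * δ * 1 + δ * δ * δ) := by
    rw [norm_smul, Real.norm_eq_abs]
    have : |(1 / 2 : ℝ)| = 1 / 2 := by norm_num
    rw [this]
    linarith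
  calc ‖E - (1 / 2 : ℝ) • (U * (star U * E) + U * (star E * U)
          + U * (star E * E) + E * (star U * E) + E * (star E * U)
          + E * (star E * E))‖
      ≤ ‖E‖ + ‖(1 / 2 : ℝ) • (U * (star U * E) + U * (star E * U)
          + U * (star E * E) + E * (star U * E) + E * (star E * U)
          + E * (star E * E))‖ := norm_sub_le _ _
    _ ≤ δ + (1 / 2) * (1 * 1 * δ + 1 * δ * 1 + 1 * δ * δ + δ * 1 * δ + δ * δ * 1 + δ * δ * δ) :=
        add_le_add hEδ hsmul
    _ ≤ δ * (δ ^ 2 + 3 * δ + 4) / 2 := by nlinarith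
end

section
/- Let A be a unital C*-algebra, let U ∈ A be a unitary element (U*U = UU* = 1), let F ∈ A, and let δ ≥ 0 satisfy ‖F − U‖ ≤ δ. Let s > 0 be a real number satisfying 5/s − 20/s³ + 16/s⁵ = 1, and suppose δ ≤ 1. Then ‖(5/s)·F − (20/s³)·F·F*·F + (16/s⁵)·F·F*·F·F*·F − U‖ ≤ δ + (20/s³)·(1 + δ)·δ·(2 + δ) + (16/s⁵)·(1 + δ)·δ·(2 + δ)·(2 + 2δ + δ²). -/
/-!
Write `E = F⋆F - 1`. Since `5/s - 20/s³ + 16/s⁵ = 1` and `F(F⋆F)² - F = F E (F⋆F + 1)`,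
the error is `V₂ - U = (F - U) - (20/s³) F E + (16/s⁵) F E (F⋆F + 1)`. Near the unitary `U`
we have `‖F‖ ≤ 1 + δ`, and `E = F⋆(F - U) + (F - U)⋆U` has norm at most `δ(2 + δ)`, so the
triangle inequality bounds the three terms separately.
-/

theorem smul_sub_smul_add_smul_sub_eq_of_sub_add_eq_one {R A : Type*} [CommRing R] [Ring A] [Algebra R A]
    (F G U : A) {a b c : R} (habc : a - b + c = 1) :
    a • F - b • (F * G * F) + c • (F * G * F * G * F) - U
      = (F - U) - b • (F * (G * F - 1)) + c • (F * (G * F - 1) * (G * F + 1)) := by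
  obtain rfl : a = 1 + b - c := by linear_combination habc
  simp only [mul_sub, sub_mul, mul_add, mul_one, mul_assoc]
  module

section NearUnitary

variable {A : Type*} [NormedRing A] [StarRing A] [CStarRing A] [Nontrivial A]
  {U F : A} {δ : ℝ}

theorem norm_le_one_add_of_norm_sub_unitary_le (hU : U ∈ unitary A) (h : ‖F - U‖ ≤ δ) :
    ‖F‖ ≤ 1 + δ := by
  calc ‖F‖ ≤ ‖U‖ + ‖F - U‖ := norm_le_norm_add_norm_sub' F U
    _ ≤ 1 + δ := by rw [CStarRing.norm_of_mem_unitary hU]; gcongr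

theorem norm_star_mul_self_sub_one_le (hU : U ∈ unitary A) (h : ‖F - U‖ ≤ δ) :
    ‖star F * F - 1‖ ≤ δ * (2 + δ) := by
  have hδ : 0 ≤ δ := (norm_nonneg _).trans h
  have hsplit : star F * F - 1 = star F * (F - U) + star (F - U) * U := by
    rw [← Unitary.star_mul_self_of_mem hU, star_sub]; noncomm_ring
  calc ‖star F * F - 1‖ ≤ ‖star F‖ * ‖F - U‖ + ‖star (F - U)‖ * ‖U‖ := by
        rw [hsplit]; exact norm_add_le_of_le (norm_mul_le _ _) (norm_mul_le _ _)
    _ ≤ (1 + δ) * δ + δ * 1 := by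
        rw [norm_star, norm_star, CStarRing.norm_of_mem_unitary hU]
        gcongr
        exact norm_le_one_add_of_norm_sub_unitary_le hU h
    _ = δ * (2 + δ) := by ring

theorem norm_star_mul_self_add_one_le (hU : U ∈ unitary A) (h : ‖F - U‖ ≤ δ) :
    ‖star F * F + 1‖ ≤ 2 + 2 * δ + δ ^ 2 := by
  have hF := norm_le_one_add_of_norm_sub_unitary_le hU h
  calc ‖star F * F + 1‖ ≤ ‖star F‖ * ‖F‖ + 1 := by
        rw [← CStarRing.norm_one (E := A)]; exact norm_add_le_of_le (norm_mul_le _ _) le_rfl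
    _ ≤ (1 + δ) * (1 + δ) + 1 := by
        rw [norm_star]; gcongr; exact (norm_nonneg F).trans hF
    _ = 2 + 2 * δ + δ ^ 2 := by ring

end NearUnitary

theorem oaa_two_rounds_error_bound_general
    {A : Type*} [NormedRing A] [StarRing A] [CStarRing A]
    [Nontrivial A] [NormedAlgebra ℝ A]
    (U : A) (hU : U ∈ unitary A) (F : A) (δ : ℝ)
    (s : ℝ) (hs : 0 < s) (hs1 : 5 / s - 20 / s ^ 3 + 16 / s ^ 5 = 1)
    (h : ‖F - U‖ ≤ δ) :
    ‖(5 / s) • F - (20 / s ^ 3) • (F * star F * F)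
        + (16 / s ^ 5) • (F * star F * F * star F * F) - U‖
      ≤ δ + (20 / s ^ 3) * ((1 + δ) * δ * (2 + δ))
        + (16 / s ^ 5) * ((1 + δ) * δ * (2 + δ) * (2 + 2 * δ + δ ^ 2)) := by
  have hδ : 0 ≤ δ := (norm_nonneg _).trans h
  have hF := norm_le_one_add_of_norm_sub_unitary_le hU h
  have hE := norm_star_mul_self_sub_one_le hU h
  have hE' := norm_star_mul_self_add_one_le hU h
  rw [smul_sub_smul_add_smul_sub_eq_of_sub_add_eq_one F (star F) U hs1]
  set E := star F * F - 1
  calc _ ≤ ‖F - U‖ + ‖(20 / s ^ 3) • (F * E)‖ + ‖(16 / s ^ 5) • (F * E * (star F * F + 1))‖ :=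
        norm_add_le_of_le (norm_sub_le _ _) le_rfl
    _ = ‖F - U‖ + 20 / s ^ 3 * ‖F * E‖ + 16 / s ^ 5 * ‖F * E * (star F * F + 1)‖ := by
        rw [norm_smul, norm_smul, Real.norm_of_nonneg (by positivity),
          Real.norm_of_nonneg (by positivity)]
    _ ≤ ‖F - U‖ + 20 / s ^ 3 * (‖F‖ * ‖E‖) + 16 / s ^ 5 * (‖F‖ * ‖E‖ * ‖star F * F + 1‖) := by
        gcongr
        · exact norm_mul_le _ _
        · exact norm_mul₃_le
    _ ≤ δ + 20 / s ^ 3 * ((1 + δ) * (δ * (2 + δ)))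
          + 16 / s ^ 5 * ((1 + δ) * (δ * (2 + δ)) * (2 + 2 * δ + δ ^ 2)) := by
        gcongr
    _ = _ := by ring

/-- Error bound for two rounds of oblivious amplitude amplification (Lemma A.2):
`V₂ = (5/s)F − (20/s³)FF*F + (16/s⁵)FF*FF*F` approximates the unitary `U`
term by term, where `s` satisfies `5/s − 20/s³ + 16/s⁵ = 1`. -/
theorem oaa_two_rounds_error_bound
    {A : Type*} [NormedRing A] [StarRing A] [CStarRing A]
    [CompleteSpace A] [Nontrivial A] [NormedAlgebra ℝ A]
    (U : A) (hU : U ∈ unitary A) (F : A) (δ : ℝ) (hδ0 : 0 ≤ δ) (hδ1 : δ ≤ 1)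
    (s : ℝ) (hs : 0 < s) (hs1 : 5 / s - 20 / s ^ 3 + 16 / s ^ 5 = 1)
    (h : ‖F - U‖ ≤ δ) :
    ‖(5 / s) • F - (20 / s ^ 3) • (F * star F * F)
        + (16 / s ^ 5) • (F * star F * F * star F * F) - U‖
      ≤ δ + (20 / s ^ 3) * ((1 + δ) * δ * (2 + δ))
        + (16 / s ^ 5) * ((1 + δ) * δ * (2 + δ) * (2 + 2 * δ + δ ^ 2)) :=
  oaa_two_rounds_error_bound_general U hU F δ s hs hs1 h
end

section
/- Let A be a unital C*-algebra, let U ∈ A be a unitary element (U*U = UU* = 1), let E ∈ A with ‖E‖ ≤ δ for some δ ≥ 0, and set F = U + E. Then ‖(3/2)·F − (1/2)·F·F*·F − U − (1/2)·(E − U·E*·U)‖ ≤ (3/2)·δ² + (1/2)·δ³. -/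
/-- First-order expansion with explicit remainder (Lemma A.3): for `F = U + E`
with `‖E‖ ≤ δ`, the amplified operator `(3/2)F − (1/2)FF*F` equals `U` plus
the linear term `½(E − U E* U)` up to a remainder of norm `≤ (3/2)δ² + (1/2)δ³`. -/
theorem oaa_first_order_expansion_remainder
    {A : Type*} [NormedRing A] [StarRing A] [CStarRing A]
    [CompleteSpace A] [Nontrivial A] [NormedAlgebra ℝ A]
    (U : A) (hU : U ∈ unitary A) (E : A) (δ : ℝ) (hδ : 0 ≤ δ)
    (hE : ‖E‖ ≤ δ) (F : A) (hF : F = U + E) :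
    ‖(3 / 2 : ℝ) • F - (1 / 2 : ℝ) • (F * star F * F) - U
        - (1 / 2 : ℝ) • (E - U * star E * U)‖
      ≤ 3 / 2 * δ ^ 2 + 1 / 2 * δ ^ 3 := by
  obtain ⟨h1, h2⟩ := hU
  -- h1 : star U * U = 1, h2 : U * star U = 1
  have e1 : (U + E) * (star U + star E) = 1 + U * star E + E * star U + E * star E := by
    simp only [add_mul, mul_add]; rw [h2]; abel
  have e2 : F * star F * F
      = U + E + U * star E * U + E
        + (U * star E * E + E * star U * E + E * star E * U + E * star E * E) := by
    rw [hF, star_add, e1]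
    have h3 : E * star U * U = E := by rw [mul_assoc, h1, mul_one]
    simp only [add_mul, mul_add, one_mul]
    rw [h3]
    abel
  have key : (3 / 2 : ℝ) • F - (1 / 2 : ℝ) • (F * star F * F) - U
        - (1 / 2 : ℝ) • (E - U * star E * U)
      = -((1 / 2 : ℝ) • (U * star E * E + E * star U * E + E * star E * U + E * star E * E)) := by
    rw [e2, hF]; module
  rw [key]
  have hU1 : ‖U‖ = 1 := CStarRing.norm_of_mem_unitary ⟨h1, h2⟩
  have hsE : ‖star E‖ = ‖E‖ := norm_star E
  have hsU : ‖star U‖ = 1 := by rw [norm_star, hU1]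
  have b1 : ‖U * star E * E‖ ≤ δ ^ 2 := by
    calc ‖U * star E * E‖ ≤ ‖U * star E‖ * ‖E‖ := norm_mul_le _ _
      _ ≤ ‖U‖ * ‖star E‖ * ‖E‖ := by gcongr; exact norm_mul_le _ _
      _ = ‖E‖ * ‖E‖ := by rw [hU1, hsE, one_mul]
      _ ≤ δ ^ 2 := by nlinarith [norm_nonneg E]
  have b2 : ‖E * star U * E‖ ≤ δ ^ 2 := by
    calc ‖E * star U * E‖ ≤ ‖E * star U‖ * ‖E‖ := norm_mul_le _ _
      _ ≤ ‖E‖ * ‖star U‖ * ‖E‖ := by gcongr; exact norm_mul_le _ _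
      _ = ‖E‖ * ‖E‖ := by rw [hsU, mul_one]
      _ ≤ δ ^ 2 := by nlinarith [norm_nonneg E]
  have b3 : ‖E * star E * U‖ ≤ δ ^ 2 := by
    calc ‖E * star E * U‖ ≤ ‖E * star E‖ * ‖U‖ := norm_mul_le _ _
      _ ≤ ‖E‖ * ‖star E‖ * ‖U‖ := by gcongr; exact norm_mul_le _ _
      _ = ‖E‖ * ‖E‖ := by rw [hU1, hsE, mul_one]
      _ ≤ δ ^ 2 := by nlinarith [norm_nonneg E]
  have b4 : ‖E * star E * E‖ ≤ δ ^ 3 := by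
    calc ‖E * star E * E‖ ≤ ‖E * star E‖ * ‖E‖ := norm_mul_le _ _
      _ ≤ ‖E‖ * ‖star E‖ * ‖E‖ := by gcongr; exact norm_mul_le _ _
      _ = ‖E‖ * ‖E‖ * ‖E‖ := by rw [hsE]
      _ ≤ δ * δ * δ := by gcongr
      _ = δ ^ 3 := by ring
  rw [norm_neg, norm_smul]
  have hsum : ‖U * star E * E + E * star U * E + E * star E * U + E * star E * E‖
      ≤ 3 * δ ^ 2 + δ ^ 3 := by
    calc ‖U * star E * E + E * star U * E + E * star E * U + E * star E * E‖
        ≤ ‖U * star E * E + E * star U * E + E * star E * U‖ + ‖E * star E * E‖ :=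
          norm_add_le _ _
      _ ≤ ‖U * star E * E + E * star U * E‖ + ‖E * star E * U‖ + ‖E * star E * E‖ := by
          gcongr; exact norm_add_le _ _
      _ ≤ ‖U * star E * E‖ + ‖E * star U * E‖ + ‖E * star E * U‖ + ‖E * star E * E‖ := by
          gcongr; exact norm_add_le _ _
      _ ≤ 3 * δ ^ 2 + δ ^ 3 := by linarith
  have : ‖(1 / 2 : ℝ)‖ = 1 / 2 := by norm_num
  rw [this]
  nlinarith
end

section
/- Let A be a complete normed ring that is a normed algebra over ℂ, let H ∈ A, and let α : ℕ → ℂ be such that the series Σ_k ‖α_k‖·‖H‖ᵏ is summable. Define U = Σ'_{k=0}^{∞} α_k • Hᵏ. Let K₁ < K₂ be natural numbers, let p ∈ [0,1), and define V₂ = Σ_{k=0}^{K₁} α_k • Hᵏ + (1−p)⁻¹ • Σ_{k=K₁+1}^{K₂} α_k • Hᵏ. Set a₁ = Σ'_{k} ‖α_{K₁+1+k}‖·‖H‖^{K₁+1+k} (the tail after K₁) and b = Σ'_{k} ‖α_{K₂+1+k}‖·‖H‖^{K₂+1+k} (the tail after K₂). Then ‖U − V₂‖ ≤ b + (p/(1−p))·a₁.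 -/
/-!
Split `U = Σ_{k ≤ K₂} αₖ Hᵏ + Σ_{k > K₂} αₖ Hᵏ`. Subtracting `V₂` leaves the order-`K₂` tail plus
`(1 - (1 - p)⁻¹) • Σ_{K₁ < k ≤ K₂} αₖ Hᵏ`. The scalar has modulus `p / (1 - p)`, and the finite
block `K₁ < k ≤ K₂` is dominated termwise by the order-`K₁` tail of `Σ ‖αₖ‖ ‖H‖ᵏ`.
-/

open Finset

section PowerSeries

variable {𝕜 A : Type*} [NormedField 𝕜] [NormedRing A] {α : ℕ → 𝕜} {x : A}

theorem summable_norm_mul_pow_nat_add (h : Summable fun k => ‖α k‖ * ‖x‖ ^ k) (n : ℕ) :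
    Summable fun k => ‖α (n + k)‖ * ‖x‖ ^ (n + k) := by
  simpa only [add_comm n] using (summable_nat_add_iff n).2 h

variable [NormedAlgebra 𝕜 A]

-- `‖x ^ 0‖ = ‖1‖` may exceed `1`, hence `k ≠ 0`.
theorem norm_smul_pow_le_of_ne_zero (c : 𝕜) (x : A) {k : ℕ} (hk : k ≠ 0) :
    ‖c • x ^ k‖ ≤ ‖c‖ * ‖x‖ ^ k :=
  (norm_smul_le c _).trans <|
    mul_le_mul_of_nonneg_left (norm_pow_le' x (Nat.pos_of_ne_zero hk)) (norm_nonneg c)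

theorem summable_smul_pow [CompleteSpace A] (h : Summable fun k => ‖α k‖ * ‖x‖ ^ k) :
    Summable fun k => α k • x ^ k :=
  h.of_norm_bounded_eventually_nat <|
    (Filter.eventually_ne_atTop 0).mono fun _ hk => norm_smul_pow_le_of_ne_zero _ _ hk

theorem norm_tsum_smul_pow_nat_add_le (h : Summable fun k => ‖α k‖ * ‖x‖ ^ k) (n : ℕ) :
    ‖∑' k, α (n + 1 + k) • x ^ (n + 1 + k)‖ ≤ ∑' k, ‖α (n + 1 + k)‖ * ‖x‖ ^ (n + 1 + k) :=
  tsum_of_norm_bounded (summable_norm_mul_pow_nat_add h (n + 1)).hasSum fun _ =>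
    norm_smul_pow_le_of_ne_zero _ _ (by omega)

theorem norm_sum_Icc_smul_pow_le (h : Summable fun k => ‖α k‖ * ‖x‖ ^ k) (n m : ℕ) :
    ‖∑ k ∈ Icc (n + 1) m, α k • x ^ k‖ ≤ ∑' k, ‖α (n + 1 + k)‖ * ‖x‖ ^ (n + 1 + k) :=
  calc ‖∑ k ∈ Icc (n + 1) m, α k • x ^ k‖
      ≤ ∑ k ∈ Icc (n + 1) m, ‖α k‖ * ‖x‖ ^ k :=
        norm_sum_le_of_le _ fun _ hk => norm_smul_pow_le_of_ne_zero _ _ (by grind)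
    _ = ∑ k ∈ range (m + 1 - (n + 1)), ‖α (n + 1 + k)‖ * ‖x‖ ^ (n + 1 + k) := by
        rw [← Ico_add_one_right_eq_Icc, sum_Ico_eq_sum_range]
    _ ≤ _ := (summable_norm_mul_pow_nat_add h (n + 1)).sum_le_tsum _ fun _ _ => by positivity

end PowerSeries

theorem tsum_sub_sum_range_add_smul_sum_Icc {R M : Type*} [Ring R] [AddCommGroup M] [Module R M]
    [TopologicalSpace M] [IsTopologicalAddGroup M] [T2Space M] {f : ℕ → M} (hf : Summable f)
    {n m : ℕ} (hnm : n ≤ m) (c : R) :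
    ∑' k, f k - (∑ k ∈ range (n + 1), f k + c • ∑ k ∈ Icc (n + 1) m, f k)
      = ∑' k, f (m + 1 + k) + (1 - c) • ∑ k ∈ Icc (n + 1) m, f k := by
  have hsplit : ∑ k ∈ range (m + 1), f k
      = ∑ k ∈ range (n + 1), f k + ∑ k ∈ Icc (n + 1) m, f k := by
    rw [← Ico_add_one_right_eq_Icc, sum_range_add_sum_Ico _ (by omega)]
  rw [← hf.sum_add_tsum_nat_add (m + 1), hsplit, sub_smul, one_smul]
  simp only [add_comm _ (m + 1)]
  abel

theorem norm_one_sub_inv_one_sub_ofReal {p : ℝ} (hp0 : 0 ≤ p) (hp1 : p < 1) :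
    ‖(1 : ℂ) - (1 - (p : ℂ))⁻¹‖ = p / (1 - p) := by
  have h : (1 : ℝ) - (1 - p)⁻¹ = -(p / (1 - p)) := by
    field_simp [(sub_pos.2 hp1).ne']
    ring
  rw [← Complex.ofReal_one, ← Complex.ofReal_sub, ← Complex.ofReal_inv, ← Complex.ofReal_sub, h,
    Complex.norm_real, norm_neg, Real.norm_of_nonneg (div_nonneg hp0 (sub_nonneg.2 hp1.le))]

/-- Bound `a₂ ≤ b + (p/(1−p))·a₁` from Theorem 1: the distance from the full
series `U = Σ αₖ Hᵏ` to the modified truncated series `V₂` (in which orders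
`K₁+1,…,K₂` are amplified by `1/(1−p)`) is at most the order-`K₂` tail `b`
plus `p/(1−p)` times the order-`K₁` tail `a₁`. -/
theorem modified_truncation_tail_bound
    {A : Type*} [NormedRing A] [CompleteSpace A] [NormedAlgebra ℂ A]
    (H : A) (α : ℕ → ℂ)
    (hsum : Summable fun k : ℕ => ‖α k‖ * ‖H‖ ^ k)
    (K₁ K₂ : ℕ) (hK : K₁ < K₂) (p : ℝ) (hp0 : 0 ≤ p) (hp1 : p < 1)
    (V₂ : A)
    (hV₂ : V₂ = (∑ k ∈ Finset.range (K₁ + 1), α k • H ^ k)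
        + ((1 : ℂ) - (p : ℂ))⁻¹ • ∑ k ∈ Finset.Icc (K₁ + 1) K₂, α k • H ^ k)
    (a₁ b : ℝ)
    (ha₁ : a₁ = ∑' k : ℕ, ‖α (K₁ + 1 + k)‖ * ‖H‖ ^ (K₁ + 1 + k))
    (hb : b = ∑' k : ℕ, ‖α (K₂ + 1 + k)‖ * ‖H‖ ^ (K₂ + 1 + k)) :
    ‖(∑' k : ℕ, α k • H ^ k) - V₂‖ ≤ b + (p / (1 - p)) * a₁ := by
  have hU : Summable fun k => α k • H ^ k := summable_smul_pow hsum
  rw [hV₂, tsum_sub_sum_range_add_smul_sum_Icc hU hK.le, ha₁, hb]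
  refine norm_add_le_of_le (norm_tsum_smul_pow_nat_add_le hsum K₂) ((norm_smul_le _ _).trans ?_)
  rw [norm_one_sub_inv_one_sub_ofReal hp0 hp1]
  exact mul_le_mul_of_nonneg_left (norm_sum_Icc_smul_pow_le hsum K₁ K₂)
    (div_nonneg hp0 (sub_nonneg.2 hp1.le))
end

section
/- Let A be a complete normed ring that is a Banach algebra over ℂ, let X ∈ A satisfy ‖X‖ ≤ ln 2, let K₁ < K₂ be natural numbers, and let p ∈ [0,1). Define F₂ = Σ_{k=0}^{K₁} Xᵏ/k! + (1−p)⁻¹ • Σ_{k=K₁+1}^{K₂} Xᵏ/k!. Then ‖exp(X) − F₂‖ ≤ (p/(1−p))·2·(ln 2)^{K₁+1}/(K₁+1)! + 2·(ln 2)^{K₂+1}/(K₂+1)!. -/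
/-!
Write `S_n` for the degree-`n` Taylor polynomial of `exp` and `T = S_{K₂} - S_{K₁}`. Since
`(1 - p)⁻¹ = 1 + p/(1-p)`, we have `F₂ = S_{K₂} + (p/(1-p)) • T`, so
`exp X - F₂ = (exp X - S_{K₂}) - (p/(1-p)) • T`. Both pieces are sums of Taylor terms of order
at least `m` (`m = K₂ + 1`, resp. `K₁ + 1`), and `(m+i)! ≥ m! i!` bounds any such sum by
`‖X‖^m/m! · e^‖X‖`, which is at most `2 (ln 2)^m/m!` when `‖X‖ ≤ ln 2`.
-/

open Finset Nat

namespace Real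

theorem pow_add_div_factorial_le {x : ℝ} (hx : 0 ≤ x) (m i : ℕ) :
    x ^ (m + i) / (m + i)! ≤ x ^ m / m ! * (x ^ i / i !) := by
  have hfact : (m ! * i ! : ℝ) ≤ (m + i)! := by
    exact_mod_cast Nat.le_of_dvd (factorial_pos _) (factorial_mul_factorial_dvd_factorial_add m i)
  calc x ^ (m + i) / (m + i)! ≤ x ^ (m + i) / (m ! * i !) := by gcongr
    _ = x ^ m / m ! * (x ^ i / i !) := by rw [pow_add]; ring

theorem sum_range_pow_add_div_factorial_le {x : ℝ} (hx : 0 ≤ x) (m n : ℕ) :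
    ∑ i ∈ range n, x ^ (m + i) / (m + i)! ≤ x ^ m / m ! * exp x :=
  calc ∑ i ∈ range n, x ^ (m + i) / (m + i)!
      ≤ ∑ i ∈ range n, x ^ m / m ! * (x ^ i / i !) :=
        sum_le_sum fun i _ => pow_add_div_factorial_le hx m i
    _ = x ^ m / m ! * ∑ i ∈ range n, x ^ i / i ! := (mul_sum _ _ _).symm
    _ ≤ x ^ m / m ! * exp x := by gcongr; exact sum_le_exp_of_nonneg hx n

theorem sum_Icc_pow_div_factorial_le {x : ℝ} (hx : 0 ≤ x) (m N : ℕ) :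
    ∑ k ∈ Icc m N, x ^ k / k ! ≤ x ^ m / m ! * exp x := by
  rw [← Ico_add_one_right_eq_Icc, sum_Ico_eq_sum_range]
  exact sum_range_pow_add_div_factorial_le hx m _

theorem tsum_pow_add_div_factorial_le {x : ℝ} (hx : 0 ≤ x) (m : ℕ) :
    ∑' i, x ^ (i + m) / (i + m)! ≤ x ^ m / m ! * exp x :=
  tsum_le_of_sum_range_le (fun _ => by positivity) fun n => by
    simpa only [add_comm _ m] using sum_range_pow_add_div_factorial_le hx m n

theorem pow_div_factorial_mul_exp_le_of_le_log_two {x : ℝ} (hx0 : 0 ≤ x) (hx : x ≤ log 2)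
    (m : ℕ) : x ^ m / m ! * exp x ≤ 2 * log 2 ^ m / m ! := by
  have hexp : exp x ≤ 2 := (exp_le_exp.2 hx).trans_eq (exp_log two_pos)
  calc x ^ m / m ! * exp x ≤ log 2 ^ m / m ! * 2 := by gcongr
    _ = 2 * log 2 ^ m / m ! := by ring

end Real

namespace NormedSpace

variable {𝕂 A : Type*} [RCLike 𝕂] [NormedRing A] [NormedAlgebra 𝕂 A]

-- `0 < k` because `‖1‖` may exceed `1` in a `NormedRing` without `NormOneClass`.
theorem norm_inv_factorial_smul_pow_le (X : A) {k : ℕ} (hk : 0 < k) :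
    ‖(k !⁻¹ : 𝕂) • X ^ k‖ ≤ ‖X‖ ^ k / k ! := by
  rw [norm_smul, norm_inv, RCLike.norm_natCast, inv_mul_eq_div]
  gcongr
  exact norm_pow_le' X hk

theorem norm_sum_Icc_inv_factorial_smul_pow_le (X : A) {m : ℕ} (hm : 0 < m) (N : ℕ) :
    ‖∑ k ∈ Icc m N, (k !⁻¹ : 𝕂) • X ^ k‖ ≤ ‖X‖ ^ m / m ! * Real.exp ‖X‖ :=
  calc ‖∑ k ∈ Icc m N, (k !⁻¹ : 𝕂) • X ^ k‖ ≤ ∑ k ∈ Icc m N, ‖X‖ ^ k / k ! :=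
        norm_sum_le_of_le _ fun _ hk =>
          norm_inv_factorial_smul_pow_le X (hm.trans_le (mem_Icc.1 hk).1)
    _ ≤ ‖X‖ ^ m / m ! * Real.exp ‖X‖ := Real.sum_Icc_pow_div_factorial_le (norm_nonneg X) m N

theorem norm_exp_sub_sum_range_le [CompleteSpace A] (X : A) {m : ℕ} (hm : 0 < m) :
    ‖exp X - ∑ k ∈ range m, (k !⁻¹ : 𝕂) • X ^ k‖ ≤ ‖X‖ ^ m / m ! * Real.exp ‖X‖ := by
  rw [← (exp_series_hasSum_exp' (𝕂 := 𝕂) X).tsum_eq,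
    ← (expSeries_summable' (𝕂 := 𝕂) X).sum_add_tsum_nat_add m, add_sub_cancel_left]
  have hsum := (summable_nat_add_iff m).2 (Real.summable_pow_div_factorial ‖X‖)
  exact (tsum_of_norm_bounded hsum.hasSum fun i =>
    norm_inv_factorial_smul_pow_le X (by omega)).trans
      (Real.tsum_pow_add_div_factorial_le (norm_nonneg X) m)

end NormedSpace

/-- Truncation-error bound of Lemma A.2: for `‖X‖ ≤ ln 2`, the modified
truncated Taylor series `F₂` (orders `K₁+1,…,K₂` amplified by `1/(1−p)`)
approximates `exp X` with error at most
`(p/(1−p))·2(ln 2)^{K₁+1}/(K₁+1)! + 2(ln 2)^{K₂+1}/(K₂+1)!`. -/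
theorem modified_exp_taylor_truncation_bound
    {A : Type*} [NormedRing A] [CompleteSpace A] [NormedAlgebra ℂ A]
    (X : A) (hX : ‖X‖ ≤ Real.log 2)
    (K₁ K₂ : ℕ) (hK : K₁ < K₂) (p : ℝ) (hp0 : 0 ≤ p) (hp1 : p < 1)
    (F₂ : A)
    (hF₂ : F₂ = (∑ k ∈ Finset.range (K₁ + 1), ((k.factorial : ℂ))⁻¹ • X ^ k)
        + ((1 : ℂ) - (p : ℂ))⁻¹ •
            ∑ k ∈ Finset.Icc (K₁ + 1) K₂, ((k.factorial : ℂ))⁻¹ • X ^ k) :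
    ‖NormedSpace.exp X - F₂‖
      ≤ (p / (1 - p)) * (2 * Real.log 2 ^ (K₁ + 1) / (K₁ + 1).factorial)
        + 2 * Real.log 2 ^ (K₂ + 1) / (K₂ + 1).factorial := by
  set T := ∑ k ∈ Icc (K₁ + 1) K₂, ((k ! : ℂ))⁻¹ • X ^ k
  set S := ∑ k ∈ range (K₂ + 1), ((k ! : ℂ))⁻¹ • X ^ k
  have hq : 0 ≤ p / (1 - p) := div_nonneg hp0 (by linarith)
  have hinv : ((1 : ℂ) - p)⁻¹ = 1 + ((p / (1 - p) : ℝ) : ℂ) := by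
    have : (1 : ℂ) - p ≠ 0 := by exact_mod_cast (sub_pos.2 hp1).ne'
    push_cast
    field_simp
    ring
  have hS : S = ∑ k ∈ range (K₁ + 1), ((k ! : ℂ))⁻¹ • X ^ k + T := by
    simp only [S, T, ← Ico_add_one_right_eq_Icc]
    exact (sum_range_add_sum_Ico _ (by omega)).symm
  have herr :
      NormedSpace.exp X - F₂ = (NormedSpace.exp X - S) - ((p / (1 - p) : ℝ) : ℂ) • T := by
    rw [hF₂, hinv, add_smul, one_smul, hS]
    abel
  have hbound := Real.pow_div_factorial_mul_exp_le_of_le_log_two (norm_nonneg X) hX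
  calc ‖NormedSpace.exp X - F₂‖ ≤ ‖NormedSpace.exp X - S‖ + p / (1 - p) * ‖T‖ := by
        rw [herr, ← norm_smul_of_nonneg hq T]
        exact norm_sub_le _ _
    _ ≤ 2 * Real.log 2 ^ (K₂ + 1) / (K₂ + 1)!
          + p / (1 - p) * (2 * Real.log 2 ^ (K₁ + 1) / (K₁ + 1)!) := by
        gcongr
        · exact (NormedSpace.norm_exp_sub_sum_range_le X (succ_pos K₂)).trans (hbound _)
        · exact (NormedSpace.norm_sum_Icc_inv_factorial_smul_pow_le X (succ_pos K₁) K₂).trans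
            (hbound _)
    _ = _ := add_comm _ _
end
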